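/- Let q ≥ 2, let 𝒯 = {X_1 → expr_1, …, X_n → expr_n} be an SLP representing T with |T| ≥ q in which every variable occurs at least once in the derivation tree, let G_q = (V, E_r) be the right q-gram neighbor graph of 𝒯, and let X_{i_1} be the label of ξ(1,q). Then every variable X_j ∈ V with j ≠ i_1 is reachable from X_{i_1}: there exists a directed path from X_{i_1} to X_j in G_q. -/

import Mathlib

/-- A straight line program over alphabet `α`: variables are `Fin n` (variable
`X_i` of the paper corresponds to index `i-1`), each with either a terminal
rule (a single character) or a nonterminal rule `X_i → X_j X_k` with `j,k < i`. -/
structure SLP (α : Type) where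
  n : ℕ
  npos : 0 < n
  rule : Fin n → α ⊕ (Fin n × Fin n)
  wf : ∀ i jk, rule i = Sum.inr jk → jk.1 < i ∧ jk.2 < i

namespace SLP

variable {α : Type}

/-- the string `val(X_i)` derived by a variable -/
def val (S : SLP α) (i : Fin S.n) : List α :=
  match h : S.rule i with
  | Sum.inl a => [a]
  | Sum.inr jk =>
    have _h1 := (S.wf i jk h).1
    have _h2 := (S.wf i jk h).2
    S.val jk.1 ++ S.val jk.2
termination_by i.val

/-- the last variable `X_n` -/
def lastIdx (S : SLP α) : Fin S.n := ⟨S.n - 1, Nat.sub_lt S.npos Nat.one_pos⟩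

/-- the string `T` represented by the SLP -/
def text (S : SLP α) : List α := S.val S.lastIdx

/-- `T([i:j])`: the (1-based, inclusive) substring of a string -/
def substr (T : List α) (i j : ℕ) : List α := (T.drop (i - 1)).take (j + 1 - i)

/-- `pre(T,q)` -/
def spre (T : List α) (q : ℕ) : List α := T.take q

/-- `suf(T,q)` -/
def ssuf (T : List α) (q : ℕ) : List α := T.drop (T.length - q)

/-- `pre([b:e],q)` for intervals of positions -/
def ipre (b e q : ℕ) : Finset ℕ := Finset.Icc b (min (b + q - 1) e)

/-- `suf([b:e],q)` for intervals of positions -/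
def isuf (b e q : ℕ) : Finset ℕ := Finset.Icc (max b (e + 1 - q)) e

/-- `Occ(T,P)`: the set of (1-based) occurrences of `P` in `T` -/
def Occ [DecidableEq α] (T P : List α) : Finset ℕ :=
  (Finset.Icc 1 T.length).filter fun k => substr T k (k + P.length - 1) = P

/-- the multiset of labels of the nodes of the derivation tree rooted at
a node labeled `X_i` -/
def occsFrom (S : SLP α) (i : Fin S.n) : Multiset (Fin S.n) :=
  match h : S.rule i with
  | Sum.inl _ => {i}
  | Sum.inr jk =>
    have _h1 := (S.wf i jk h).1
    have _h2 := (S.wf i jk h).2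
    i ::ₘ (S.occsFrom jk.1 + S.occsFrom jk.2)
termination_by i.val

/-- `vOcc(X_i)`: the number of nodes of the derivation tree labeled `X_i` -/
def vOcc (S : SLP α) (i : Fin S.n) : ℕ := (S.occsFrom S.lastIdx).count i

/-- the string `t_i = suf(val(X_{ℓ(i)}),q-1) pre(val(X_{r(i)}),q-1)`
(and `[]` for a terminal rule) -/
def tstr (S : SLP α) (q : ℕ) (i : Fin S.n) : List α :=
  match S.rule i with
  | Sum.inl _ => []
  | Sum.inr jk => ssuf (S.val jk.1) (q - 1) ++ spre (S.val jk.2) (q - 1)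

/-- `label(X_i) = t_i([q:|t_i|])` -/
def labelStr (S : SLP α) (q : ℕ) (i : Fin S.n) : List α := (S.tstr q i).drop (q - 1)

/-- Nodes of the derivation tree are represented by the path from the root
(`false` = go to left child, `true` = go to right child).  `descend i p`
returns the label of the node reached from a node labeled `X_i` by path `p`. -/
def descend (S : SLP α) : Fin S.n → List Bool → Option (Fin S.n)
  | i, [] => some i
  | i, b :: p =>
    match S.rule i with
    | Sum.inl _ => none
    | Sum.inr jk => S.descend (if b then jk.2 else jk.1) p

/-- the label of the node of the derivation tree reached by path `p` from the root -/
def nodeVar (S : SLP α) (p : List Bool) : Option (Fin S.n) := S.descend S.lastIdx p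

/-- `p` is a valid node of the derivation tree -/
def IsNode (S : SLP α) (p : List Bool) : Prop := (S.nodeVar p).isSome

/-- the 0-based offset in `val(X_i)` of the part derived below path `p` -/
def offsetFrom (S : SLP α) : Fin S.n → List Bool → ℕ
  | _, [] => 0
  | i, b :: p =>
    match S.rule i with
    | Sum.inl _ => 0
    | Sum.inr jk =>
      if b then (S.val jk.1).length + S.offsetFrom jk.2 p
      else S.offsetFrom jk.1 p

/-- the 0-based offset in `T` of the interval derived by node `p` -/
def offset (S : SLP α) (p : List Bool) : ℕ := S.offsetFrom S.lastIdx p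

/-- `itv(v)`: the (1-based) interval of positions of `T` derived by node `p` -/
def itv (S : SLP α) (p : List Bool) : Finset ℕ :=
  match S.nodeVar p with
  | some i => Finset.Icc (S.offset p + 1) (S.offset p + (S.val i).length)
  | none => ∅

/-- `p = ξ(b,e)`: `p` is the deepest node whose interval contains `[b:e]`,
i.e. `itv(p) ⊇ [b:e]` and no proper descendant of `p` satisfies this. -/
def Stabs (S : SLP α) (p : List Bool) (b e : ℕ) : Prop :=
  S.IsNode p ∧ Finset.Icc b e ⊆ S.itv p ∧
  ∀ p' : List Bool, p <+: p' → p ≠ p' → S.IsNode p' → ¬ Finset.Icc b e ⊆ S.itv p'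

/-- `X_j` is a right `q`-gram neighbor of `X_i` -/
def RightNbr (S : SLP α) (q : ℕ) (i j : Fin S.n) : Prop :=
  i ≠ j ∧ ∃ u p p', 1 ≤ u ∧ u + q ≤ S.text.length ∧
    S.Stabs p u (u + q - 1) ∧ S.nodeVar p = some i ∧
    S.Stabs p' (u + 1) (u + q) ∧ S.nodeVar p' = some j

/-- `lm_q(X_i)`: the last variable of length `≥ q` on the sequence `i, ℓ(i), ℓ(ℓ(i)), …`
(meaningful when `|val(X_i)| ≥ q`) -/
def lm (S : SLP α) (q : ℕ) (i : Fin S.n) : Fin S.n :=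
  match h : S.rule i with
  | Sum.inl _ => i
  | Sum.inr jk =>
    have := (S.wf i jk h).1
    if (S.val jk.1).length < q then i else S.lm q jk.1
termination_by i.val

/-- `rm_q(X_i)`: the last variable of length `≥ q` on the sequence `i, r(i), r(r(i)), …` -/
def rm (S : SLP α) (q : ℕ) (i : Fin S.n) : Fin S.n :=
  match h : S.rule i with
  | Sum.inl _ => i
  | Sum.inr jk =>
    have := (S.wf i jk h).2
    if (S.val jk.2).length < q then i else S.rm q jk.2
termination_by i.val

/-- `lm_q` returning `null` (`none`) when `|val(X_i)| < q` -/
def lmOpt (S : SLP α) (q : ℕ) (i : Fin S.n) : Option (Fin S.n) :=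
  if (S.val i).length < q then none else some (S.lm q i)

/-- `rm_q` returning `null` (`none`) when `|val(X_i)| < q` -/
def rmOpt (S : SLP α) (q : ℕ) (i : Fin S.n) : Option (Fin S.n) :=
  if (S.val i).length < q then none else some (S.rm q i)

/-- `LSpine S i k`: `k` occurs in the sequence `i, ℓ(i), ℓ(ℓ(i)), …`
(the leftmost path of the derivation subtree rooted at a node labeled `X_i`) -/
inductive LSpine (S : SLP α) : Fin S.n → Fin S.n → Prop
  | refl (i : Fin S.n) : LSpine S i i
  | step {i k : Fin S.n} {jk : Fin S.n × Fin S.n} :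
      S.rule i = Sum.inr jk → LSpine S jk.1 k → LSpine S i k

end SLP

/-!
Every node `v` of the derivation tree whose label derives a string of length at least `q ≥ 2`
is `ξ(u, u+q-1)` for a window of length `q` straddling the boundary between its two children.
Sliding a window of length `q` across `T` from `[1:q]` to `[u:u+q-1]`, the labels of consecutive
nodes `ξ` are either equal or, by definition, right `q`-gram neighbors; so the label of `v` is
reached from that of `ξ(1,q)`. The occurrence hypothesis provides such a node `v` for every
variable.
-/

theorem List.prefix_or_prefix_or_exists_diverge {β : Type*} :
    ∀ p p' : List β, p <+: p' ∨ p' <+: p ∨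
      ∃ c x y s t, x ≠ y ∧ p = c ++ x :: s ∧ p' = c ++ y :: t
  | [], _ => Or.inl (List.nil_prefix)
  | _ :: _, [] => Or.inr (Or.inl (List.nil_prefix))
  | a :: s, b :: t => by
    by_cases hab : a = b
    · subst hab
      rcases List.prefix_or_prefix_or_exists_diverge s t with
        h | h | ⟨c, x, y, s', t', hxy, hs, ht⟩
      · exact Or.inl (List.cons_prefix_cons.mpr ⟨rfl, h⟩)
      · exact Or.inr (Or.inl (List.cons_prefix_cons.mpr ⟨rfl, h⟩))
      · exact Or.inr (Or.inr ⟨a :: c, x, y, s', t', hxy, by simp [hs], by simp [ht]⟩)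
    · exact Or.inr (Or.inr ⟨[], a, b, s, t, hab, rfl, rfl⟩)

namespace SLP

variable {α : Type} (S : SLP α)

theorem val_of_rule_inl {i : Fin S.n} {a : α} (h : S.rule i = Sum.inl a) : S.val i = [a] := by
  rw [val]; split <;> simp_all

theorem val_of_rule_inr {i : Fin S.n} {jk : Fin S.n × Fin S.n} (h : S.rule i = Sum.inr jk) :
    S.val i = S.val jk.1 ++ S.val jk.2 := by
  rw [val]; split <;> simp_all

theorem length_val_pos (i : Fin S.n) : 0 < (S.val i).length := by
  cases h : S.rule i with
  | inl a => simp [S.val_of_rule_inl h]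
  | inr jk =>
    have := (S.wf i jk h).1
    have := length_val_pos jk.1
    simp [S.val_of_rule_inr h]
    omega
termination_by i.val

theorem descend_append (i : Fin S.n) (s t : List Bool) :
    S.descend i (s ++ t) = (S.descend i s).bind fun k => S.descend k t := by
  induction s generalizing i with
  | nil => simp [descend]
  | cons b s ih =>
    cases h : S.rule i with
    | inl a => simp [descend, h]
    | inr jk => simp [descend, h, ih]

theorem offsetFrom_append {i k : Fin S.n} (s t : List Bool) (h : S.descend i s = some k) :
    S.offsetFrom i (s ++ t) = S.offsetFrom i s + S.offsetFrom k t := by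
  induction s generalizing i with
  | nil => cases h; simp [offsetFrom]
  | cons b s ih =>
    cases hr : S.rule i with
    | inl a => simp [descend, hr] at h
    | inr jk =>
      cases b <;> simp only [descend, hr, Bool.false_eq_true, if_true, if_false] at h <;>
        simp [offsetFrom, hr, ih h, Nat.add_assoc]

theorem offsetFrom_add_length_le {i m : Fin S.n} (s : List Bool) (h : S.descend i s = some m) :
    S.offsetFrom i s + (S.val m).length ≤ (S.val i).length := by
  induction s generalizing i with
  | nil => cases h; simp [offsetFrom]
  | cons b s ih =>
    cases hr : S.rule i with
    | inl a => simp [descend, hr] at h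
    | inr jk =>
      rw [S.val_of_rule_inr hr, List.length_append]
      cases b <;> simp only [descend, hr, Bool.false_eq_true, if_true, if_false] at h <;>
        simp only [offsetFrom, hr, Bool.false_eq_true, if_true, if_false] <;> have := ih h <;> omega

theorem nodeVar_append (s t : List Bool) :
    S.nodeVar (s ++ t) = (S.nodeVar s).bind fun k => S.descend k t :=
  S.descend_append _ s t

theorem itv_of_nodeVar_eq_some {p : List Bool} {i : Fin S.n} (h : S.nodeVar p = some i) :
    S.itv p = Finset.Icc (S.offset p + 1) (S.offset p + (S.val i).length) := by
  unfold itv; rw [h]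

theorem itv_of_nodeVar_eq_none {p : List Bool} (h : S.nodeVar p = none) : S.itv p = ∅ := by
  unfold itv; rw [h]

theorem isNode_of_mem_itv {p : List Bool} {k : ℕ} (h : k ∈ S.itv p) : S.IsNode p := by
  unfold IsNode
  cases hp : S.nodeVar p with
  | none => simp [S.itv_of_nodeVar_eq_none hp] at h
  | some i => rfl

theorem itv_append_subset (p t : List Bool) : S.itv (p ++ t) ⊆ S.itv p := by
  cases hp : S.nodeVar p with
  | none =>
    have : S.nodeVar (p ++ t) = none := by simp [nodeVar_append, hp]
    simp [S.itv_of_nodeVar_eq_none this]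
  | some k =>
    cases hm : S.descend k t with
    | none =>
      have : S.nodeVar (p ++ t) = none := by simp [nodeVar_append, hp, hm]
      simp [S.itv_of_nodeVar_eq_none this]
    | some m =>
      have hpt : S.nodeVar (p ++ t) = some m := by simp [nodeVar_append, hp, hm]
      rw [S.itv_of_nodeVar_eq_some hp, S.itv_of_nodeVar_eq_some hpt]
      have hoff : S.offset (p ++ t) = S.offset p + S.offsetFrom k t := S.offsetFrom_append p t hp
      have := S.offsetFrom_add_length_le t hm
      apply Finset.Icc_subset_Icc <;> omega

theorem itv_subset_Icc_text (p : List Bool) : S.itv p ⊆ Finset.Icc 1 S.text.length := by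
  simpa [S.itv_of_nodeVar_eq_some (p := []) rfl, offset, offsetFrom, text]
    using S.itv_append_subset [] p

section Children

variable {S} {p : List Bool} {i : Fin S.n}

theorem nodeVar_append_singleton_of_rule_inl {a : α} (hi : S.nodeVar p = some i)
    (hr : S.rule i = Sum.inl a) (x : Bool) : S.nodeVar (p ++ [x]) = none := by
  simp [nodeVar_append, hi, descend, hr]

variable {jk : Fin S.n × Fin S.n}

theorem nodeVar_append_false (hi : S.nodeVar p = some i) (hr : S.rule i = Sum.inr jk) :
    S.nodeVar (p ++ [false]) = some jk.1 := by
  simp [nodeVar_append, hi, descend, hr]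

theorem nodeVar_append_true (hi : S.nodeVar p = some i) (hr : S.rule i = Sum.inr jk) :
    S.nodeVar (p ++ [true]) = some jk.2 := by
  simp [nodeVar_append, hi, descend, hr]

theorem itv_append_false (hi : S.nodeVar p = some i) (hr : S.rule i = Sum.inr jk) :
    S.itv (p ++ [false]) = Finset.Icc (S.offset p + 1) (S.offset p + (S.val jk.1).length) := by
  rw [S.itv_of_nodeVar_eq_some (nodeVar_append_false hi hr), offset,
    S.offsetFrom_append p [false] hi]
  simp [offsetFrom, hr, offset]

theorem itv_append_true (hi : S.nodeVar p = some i) (hr : S.rule i = Sum.inr jk) :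
    S.itv (p ++ [true]) = Finset.Icc (S.offset p + (S.val jk.1).length + 1)
      (S.offset p + (S.val jk.1).length + (S.val jk.2).length) := by
  rw [S.itv_of_nodeVar_eq_some (nodeVar_append_true hi hr), offset,
    S.offsetFrom_append p [true] hi]
  simp [offsetFrom, hr, offset, Nat.add_assoc]

end Children

theorem disjoint_itv_children (p : List Bool) :
    Disjoint (S.itv (p ++ [false])) (S.itv (p ++ [true])) := by
  cases hp : S.nodeVar p with
  | none =>
    have : S.itv (p ++ [false]) = ∅ :=
      Finset.subset_empty.mp (S.itv_of_nodeVar_eq_none hp ▸ S.itv_append_subset p [false])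
    simp [this]
  | some i =>
    cases hr : S.rule i with
    | inl a =>
      simp [S.itv_of_nodeVar_eq_none (nodeVar_append_singleton_of_rule_inl hp hr false)]
    | inr jk =>
      rw [itv_append_false hp hr, itv_append_true hp hr, Finset.disjoint_left]
      simp only [Finset.mem_Icc]
      omega

theorem Stabs.unique {S : SLP α} {p p' : List Bool} {b e : ℕ} (hbe : b ≤ e)
    (h : S.Stabs p b e) (h' : S.Stabs p' b e) : p = p' := by
  rcases List.prefix_or_prefix_or_exists_diverge p p' with
    hp | hp | ⟨c, x, y, s, t, hxy, rfl, rfl⟩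
  · by_contra hne
    exact h.2.2 p' hp hne h'.1 h'.2.1
  · by_contra hne
    exact h'.2.2 p hp (Ne.symm hne) h.1 h.2.1
  · have hb : b ∈ Finset.Icc b e := Finset.mem_Icc.mpr ⟨le_rfl, hbe⟩
    have hx : b ∈ S.itv (c ++ [x]) := S.itv_append_subset (c ++ [x]) s (by simpa using h.2.1 hb)
    have hy : b ∈ S.itv (c ++ [y]) := S.itv_append_subset (c ++ [y]) t (by simpa using h'.2.1 hb)
    cases x <;> cases y <;> simp only [ne_eq, not_true_eq_false] at hxy
    · exact (Finset.disjoint_left.mp (S.disjoint_itv_children c) hx hy).elim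
    · exact (Finset.disjoint_left.mp (S.disjoint_itv_children c) hy hx).elim

theorem stabs_of_forall_not_subset_itv_append {p : List Bool} {b e : ℕ} (hbe : b ≤ e)
    (h : Finset.Icc b e ⊆ S.itv p) (hc : ∀ x, ¬ Finset.Icc b e ⊆ S.itv (p ++ [x])) :
    S.Stabs p b e := by
  refine ⟨S.isNode_of_mem_itv (h (Finset.mem_Icc.mpr ⟨le_rfl, hbe⟩)), h, ?_⟩
  rintro _ ⟨_ | ⟨x, s⟩, rfl⟩ hne - hsub
  · exact hne (List.append_nil p).symm
  · exact hc x (hsub.trans (by simpa using S.itv_append_subset (p ++ [x]) s))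

theorem exists_stabs_of_subset_itv {b e : ℕ} (hbe : b ≤ e) (i : Fin S.n) (p : List Bool)
    (hi : S.nodeVar p = some i) (h : Finset.Icc b e ⊆ S.itv p) : ∃ p', S.Stabs p' b e := by
  cases hr : S.rule i with
  | inl a =>
    refine ⟨p, S.stabs_of_forall_not_subset_itv_append hbe h fun x hsub => ?_⟩
    have := hsub (Finset.mem_Icc.mpr ⟨le_rfl, hbe⟩)
    simp [S.itv_of_nodeVar_eq_none (nodeVar_append_singleton_of_rule_inl hi hr x)] at this
  | inr jk =>
    have := S.wf i jk hr
    by_cases hl : Finset.Icc b e ⊆ S.itv (p ++ [false])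
    · exact exists_stabs_of_subset_itv hbe jk.1 _ (nodeVar_append_false hi hr) hl
    by_cases hr' : Finset.Icc b e ⊆ S.itv (p ++ [true])
    · exact exists_stabs_of_subset_itv hbe jk.2 _ (nodeVar_append_true hi hr) hr'
    refine ⟨p, S.stabs_of_forall_not_subset_itv_append hbe h ?_⟩
    rintro (_ | _) <;> assumption
termination_by i.val

theorem exists_stabs {b e : ℕ} (hb : 1 ≤ b) (hbe : b ≤ e) (he : e ≤ S.text.length) :
    ∃ p i, S.Stabs p b e ∧ S.nodeVar p = some i := by
  obtain ⟨p, hp⟩ := S.exists_stabs_of_subset_itv hbe S.lastIdx [] rfl <| by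
    simpa [S.itv_of_nodeVar_eq_some (p := []) rfl, offset, offsetFrom, text]
      using Finset.Icc_subset_Icc hb he
  obtain ⟨i, hi⟩ := Option.isSome_iff_exists.mp hp.1
  exact ⟨p, i, hp, hi⟩

theorem exists_window_stabs {q : ℕ} (hq : 2 ≤ q) {v : List Bool} {j : Fin S.n}
    (hv : S.nodeVar v = some j) (hj : q ≤ (S.val j).length) :
    ∃ u, 1 ≤ u ∧ u + q - 1 ≤ S.text.length ∧ S.Stabs v u (u + q - 1) := by
  cases hr : S.rule j with
  | inl a => simp [S.val_of_rule_inl hr] at hj; omega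
  | inr jk =>
    have hL := S.length_val_pos jk.1
    have hR := S.length_val_pos jk.2
    rw [S.val_of_rule_inr hr, List.length_append] at hj
    have hitv := S.itv_of_nodeVar_eq_some hv
    rw [S.val_of_rule_inr hr, List.length_append] at hitv
    -- the window starts as late as possible within `v` while still covering the last
    -- position of the left child, so it meets both children
    set u := S.offset v +
      min (S.val jk.1).length ((S.val jk.1).length + (S.val jk.2).length + 1 - q)
    have hsub : Finset.Icc u (u + q - 1) ⊆ S.itv v := by
      rw [hitv]; apply Finset.Icc_subset_Icc <;> omega
    refine ⟨u, by omega, ?_, S.stabs_of_forall_not_subset_itv_append (by omega) hsub ?_⟩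
    · have := S.itv_subset_Icc_text v (hsub (Finset.right_mem_Icc.mpr (by omega)))
      simp only [Finset.mem_Icc] at this
      omega
    · rintro (_ | _) hx
      · have := hx (Finset.mem_Icc.mpr
          (show u ≤ S.offset v + (S.val jk.1).length + 1 ∧ _ by omega))
        rw [itv_append_false hv hr, Finset.mem_Icc] at this
        omega
      · have := hx (Finset.mem_Icc.mpr
          (show u ≤ S.offset v + (S.val jk.1).length ∧ _ by omega))
        rw [itv_append_true hv hr, Finset.mem_Icc] at this
        omega

theorem exists_descend_of_mem_occsFrom (i : Fin S.n) {j : Fin S.n} (h : j ∈ S.occsFrom i) :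
    ∃ s, S.descend i s = some j := by
  rw [occsFrom] at h
  split at h
  · exact ⟨[], by simp_all [descend]⟩
  · rename_i jk hr
    have := S.wf i jk hr
    rcases Multiset.mem_cons.mp h with rfl | h
    · exact ⟨[], rfl⟩
    rcases Multiset.mem_add.mp h with h | h
    · obtain ⟨s, hs⟩ := exists_descend_of_mem_occsFrom jk.1 h
      exact ⟨false :: s, by simpa [descend, hr] using hs⟩
    · obtain ⟨s, hs⟩ := exists_descend_of_mem_occsFrom jk.2 h
      exact ⟨true :: s, by simpa [descend, hr] using hs⟩
termination_by i.val

theorem exists_nodeVar_eq_of_vOcc_pos {j : Fin S.n} (h : 0 < S.vOcc j) :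
    ∃ p, S.nodeVar p = some j :=
  S.exists_descend_of_mem_occsFrom S.lastIdx (Multiset.count_pos.mp h)

theorem reflTransGen_rightNbr_of_stabs {q : ℕ} (hq : 1 ≤ q) {p₁ : List Bool} {i₁ : Fin S.n}
    (h₁ : S.Stabs p₁ 1 q) (hv₁ : S.nodeVar p₁ = some i₁) {u : ℕ} (hu : 1 ≤ u)
    (huq : u + q - 1 ≤ S.text.length) {p : List Bool} {i : Fin S.n}
    (h : S.Stabs p u (u + q - 1)) (hv : S.nodeVar p = some i) :
    Relation.ReflTransGen (S.RightNbr q) i₁ i := by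
  induction u, hu using Nat.le_induction generalizing p i with
  | base =>
    rw [show 1 + q - 1 = q by omega] at h
    obtain rfl := h.unique hq h₁
    obtain rfl : i = i₁ := Option.some.inj (hv.symm.trans hv₁)
    exact .refl
  | succ u hu ih =>
    obtain ⟨p₀, a, h₀, hv₀⟩ :=
      S.exists_stabs (b := u) (e := u + q - 1) hu (by omega) (by omega)
    by_cases hai : a = i
    · exact hai ▸ ih (by omega) h₀ hv₀
    rw [show u + 1 + q - 1 = u + q by omega] at h
    exact (ih (by omega) h₀ hv₀).tail ⟨hai, u, p₀, p, hu, by omega, h₀, hv₀, h, hv⟩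

end SLP

theorem stmt8_general {α : Type} (q : ℕ) (hq : 2 ≤ q) (S : SLP α)
    (hocc : ∀ i, 1 ≤ S.vOcc i)
    (p : List Bool) (i1 : Fin S.n)
    (hstab : S.Stabs p 1 q) (hvar : S.nodeVar p = some i1)
    (j : Fin S.n) (hj : q ≤ (S.val j).length) :
    Relation.ReflTransGen (fun a b => S.RightNbr q a b) i1 j := by
  obtain ⟨v, hv⟩ := S.exists_nodeVar_eq_of_vOcc_pos (hocc j)
  obtain ⟨u, hu, huq, hstabv⟩ := S.exists_window_stabs hq hv hj
  exact S.reflTransGen_rightNbr_of_stabs (by omega) hstab hvar hu huq hstabv hv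

/-- in the right `q`-gram neighbor graph, every vertex
(variable of length `≥ q`) other than `X_{i₁} = ξ(1,q)` is reachable from
`X_{i₁}` by a directed path. -/
theorem stmt8 {α : Type} (q : ℕ) (hq : 2 ≤ q) (S : SLP α)
    (hT : q ≤ S.text.length) (hocc : ∀ i, 1 ≤ S.vOcc i)
    (p : List Bool) (i1 : Fin S.n)
    (hstab : S.Stabs p 1 q) (hvar : S.nodeVar p = some i1)
    (j : Fin S.n) (hj : q ≤ (S.val j).length) (hne : j ≠ i1) :
    Relation.ReflTransGen (fun a b => S.RightNbr q a b) i1 j :=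
  stmt8_general q hq S hocc p i1 hstab hvar j hj
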